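/- arXiv:1110.5201 — 2 statements merged into one kernel-verified Lean document; each statement's English description precedes it below -/
import Mathlib

section
/- Let (X, d) be a metric space with d bounded (for instance X compact), let T : X → X be any map and let x, y ∈ X. Then the following two conditions are equivalent: (A) for every t > 0, limsup_{n→∞} (1/n)·#{0 ≤ i ≤ n−1 : d(Tⁱx, Tⁱy) < t} = 1, and there exists t₀ > 0 with liminf_{n→∞} (1/n)·#{0 ≤ i ≤ n−1 : d(Tⁱx, Tⁱy) < t₀} < 1; (B) liminf_{n→∞} (1/n)·Σ_{i=0}^{n−1} d(Tⁱx, Tⁱy) = 0 and limsup_{n→∞} (1/n)·Σ_{i=0}^{n−1} d(Tⁱx, Tⁱy) > 0. That is, the pair (x, y) is DC2-scrambled if and only if the ergodic averages of the distance along the two orbits have lower limit zero and positive upper limit. -/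
/-!
Let `A n` be the ergodic average of the orbit distance `d i`, `C` a bound for `d` and `F t n`
the fraction of times `i < n` with `t ≤ d i`. Markov's inequality gives `t * F t n ≤ A n`, and
splitting the sum into close and far times gives `A n ≤ t + C * F t n`. Both bounds hold at each
single `n`, so along any set of times `A n` is eventually small iff, for every `t > 0`, `F t n`
is eventually small. Applied to "frequently" this turns `limsup = 1` of every close fraction
into `liminf A = 0`; applied to "eventually" and negated, it turns the existence of `t₀` into
`0 < limsup A`.
-/

open Filter

/-- The fraction of times `i ∈ [0, n-1]` with `dist (T^[i] x) (T^[i] y) < t`. -/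
noncomputable def closeTimesFraction {X : Type*} [MetricSpace X] (T : X → X)
    (x y : X) (t : ℝ) (n : ℕ) : ℝ :=
  (((Finset.range n).filter (fun i => dist (T^[i] x) (T^[i] y) < t)).card : ℝ) / n

/-- The `n`-th ergodic average of the distance between the orbits of `x` and `y` under `T`. -/
noncomputable def distAverage {X : Type*} [MetricSpace X] (T : X → X)
    (x y : X) (n : ℕ) : ℝ :=
  (∑ i ∈ Finset.range n, dist (T^[i] x) (T^[i] y)) / n

open Finset

namespace Finset

variable {ι R : Type*} [CommSemiring R] [LinearOrder R] [IsOrderedRing R]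
  {s : Finset ι} {a : ι → R}

theorem mul_card_filter_le_sum (ha : ∀ i ∈ s, 0 ≤ a i) (t : R) :
    t * #{i ∈ s | t ≤ a i} ≤ ∑ i ∈ s, a i :=
  calc t * #{i ∈ s | t ≤ a i} = #{i ∈ s | t ≤ a i} • t := by rw [nsmul_eq_mul, mul_comm]
    _ ≤ ∑ i ∈ s with t ≤ a i, a i := card_nsmul_le_sum _ _ _ fun i hi => (mem_filter.1 hi).2
    _ ≤ ∑ i ∈ s, a i := sum_le_sum_of_subset_of_nonneg (filter_subset _ _)
        fun i hi _ => ha i hi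

theorem sum_le_mul_card_add_mul_card_filter {C t : R} (ha : ∀ i ∈ s, a i ≤ C) (ht : 0 ≤ t) :
    ∑ i ∈ s, a i ≤ t * #s + C * #{i ∈ s | t ≤ a i} := by
  rw [← sum_filter_add_sum_filter_not s (fun i => a i < t)]
  gcongr ?_ + ?_
  · calc ∑ i ∈ s with a i < t, a i ≤ #{i ∈ s | a i < t} • t :=
          sum_le_card_nsmul _ _ _ fun i hi => (mem_filter.1 hi).2.le
      _ ≤ t * #s := by rw [nsmul_eq_mul, mul_comm]; gcongr; exact filter_subset _ _
  · simp only [not_lt]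
    calc ∑ i ∈ s with t ≤ a i, a i ≤ #{i ∈ s | t ≤ a i} • C :=
          sum_le_card_nsmul _ _ _ fun i hi => ha i (mem_filter.1 hi).1
      _ = C * #{i ∈ s | t ≤ a i} := by rw [nsmul_eq_mul, mul_comm]

end Finset

namespace Filter

variable {α β : Type*} [ConditionallyCompleteLinearOrder β] {l : Filter α} [l.NeBot]
  {u : α → β}

theorem limsup_eq_iff_frequently_lt {M : β} (hbdd : l.IsBoundedUnder (· ≥ ·) u)
    (hle : ∀ a, u a ≤ M) : limsup u l = M ↔ ∀ b < M, ∃ᶠ a in l, b < u a := by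
  rw [le_antisymm_iff, and_iff_right (limsup_le_of_le hbdd.isCoboundedUnder_le
    (.of_forall hle)), le_limsup_iff hbdd.isCoboundedUnder_le (isBoundedUnder_of ⟨M, hle⟩)]

theorem liminf_eq_iff_frequently_lt {m : β} (hbdd : l.IsBoundedUnder (· ≤ ·) u)
    (hle : ∀ a, m ≤ u a) : liminf u l = m ↔ ∀ b > m, ∃ᶠ a in l, u a < b :=
  limsup_eq_iff_frequently_lt (β := βᵒᵈ) hbdd hle

theorem liminf_lt_iff_not_forall_eventually_lt {M : β} (hbdd : l.IsBoundedUnder (· ≥ ·) u)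
    (hle : ∀ a, u a ≤ M) : liminf u l < M ↔ ¬∀ b < M, ∀ᶠ a in l, b < u a := by
  rw [← le_liminf_iff (isBoundedUnder_of ⟨M, hle⟩).isCoboundedUnder_ge hbdd, not_le]

theorem lt_limsup_iff_not_forall_eventually_lt {m : β} (hbdd : l.IsBoundedUnder (· ≤ ·) u)
    (hle : ∀ a, m ≤ u a) : m < limsup u l ↔ ¬∀ b > m, ∀ᶠ a in l, u a < b :=
  liminf_lt_iff_not_forall_eventually_lt (β := βᵒᵈ) hbdd hle

end Filter

section DistAverage

variable {X : Type*} [MetricSpace X] (T : X → X) (x y : X)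

theorem closeTimesFraction_nonneg (t : ℝ) (n : ℕ) : 0 ≤ closeTimesFraction T x y t n := by
  unfold closeTimesFraction; positivity

theorem closeTimesFraction_le_one (t : ℝ) (n : ℕ) : closeTimesFraction T x y t n ≤ 1 := by
  unfold closeTimesFraction
  refine div_le_one_of_le₀ ?_ n.cast_nonneg
  exact_mod_cast (card_filter_le _ _).trans (card_range n).le

theorem distAverage_nonneg (n : ℕ) : 0 ≤ distAverage T x y n := by
  unfold distAverage; positivity

theorem distAverage_le {C : ℝ} (hC : ∀ a b : X, dist a b ≤ C) (n : ℕ) :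
    distAverage T x y n ≤ C := by
  refine div_le_of_le_mul₀ n.cast_nonneg (dist_nonneg.trans (hC x x)) ?_
  simpa [mul_comm] using sum_le_card_nsmul (range n) _ C fun i _ => hC _ _

theorem one_sub_closeTimesFraction {n : ℕ} (hn : n ≠ 0) (t : ℝ) :
    1 - closeTimesFraction T x y t n =
      #{i ∈ range n | t ≤ dist (T^[i] x) (T^[i] y)} / n := by
  have hcard : (#{i ∈ range n | dist (T^[i] x) (T^[i] y) < t} : ℝ) +
      #{i ∈ range n | t ≤ dist (T^[i] x) (T^[i] y)} = n := by
    have := card_filter_add_card_filter_not (s := range n) fun i => dist (T^[i] x) (T^[i] y) < t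
    simp only [not_lt, card_range] at this
    exact_mod_cast this
  rw [closeTimesFraction, eq_div_iff (by exact_mod_cast hn), sub_mul, one_mul,
    div_mul_cancel₀ _ (by exact_mod_cast hn)]
  linarith

theorem mul_one_sub_closeTimesFraction_le_distAverage {n : ℕ} (hn : n ≠ 0) (t : ℝ) :
    t * (1 - closeTimesFraction T x y t n) ≤ distAverage T x y n := by
  rw [one_sub_closeTimesFraction T x y hn, mul_div_assoc', distAverage]
  gcongr
  exact mul_card_filter_le_sum (fun i _ => dist_nonneg) t

theorem distAverage_le_add_mul_one_sub_closeTimesFraction {C t : ℝ}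
    (hC : ∀ a b : X, dist a b ≤ C) (ht : 0 ≤ t) {n : ℕ} (hn : n ≠ 0) :
    distAverage T x y n ≤ t + C * (1 - closeTimesFraction T x y t n) := by
  have hn' : (0 : ℝ) < n := by exact_mod_cast hn.bot_lt
  rw [one_sub_closeTimesFraction T x y hn, distAverage, div_le_iff₀ hn', add_mul, mul_assoc,
    div_mul_cancel₀ _ hn'.ne']
  simpa using sum_le_mul_card_add_mul_card_filter (s := range n) (fun i _ => hC _ _) ht

theorem lt_closeTimesFraction_of_distAverage_lt {t r : ℝ} (ht : 0 < t) {n : ℕ} (hn : n ≠ 0)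
    (h : distAverage T x y n < t * (1 - r)) : r < closeTimesFraction T x y t n := by
  have := (mul_one_sub_closeTimesFraction_le_distAverage T x y hn t).trans_lt h
  linarith [lt_of_mul_lt_mul_left this ht.le]

theorem exists_closeTimesFraction_imp_distAverage_lt {C ε : ℝ} (hC : ∀ a b : X, dist a b ≤ C)
    (hε : 0 < ε) : ∃ t > 0, ∃ r < 1, ∀ n ≠ 0,
      r < closeTimesFraction T x y t n → distAverage T x y n < ε := by
  have hC₀ : 0 ≤ C := dist_nonneg.trans (hC x x)
  set δ := ε / (2 * (C + 1))
  have hδ : 0 < δ := by positivity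
  have hCδ : C * δ < ε / 2 := by
    rw [mul_div_assoc', div_lt_div_iff₀ (by positivity) two_pos]
    nlinarith
  refine ⟨ε / 2, half_pos hε, 1 - δ, by linarith, fun n hn hr => ?_⟩
  calc distAverage T x y n ≤ ε / 2 + C * (1 - closeTimesFraction T x y (ε / 2) n) :=
        distAverage_le_add_mul_one_sub_closeTimesFraction T x y hC (half_pos hε).le hn
    _ ≤ ε / 2 + C * δ := by gcongr; linarith
    _ < ε := by linarith

theorem forall_frequently_lt_closeTimesFraction_iff {C : ℝ} (hC : ∀ a b : X, dist a b ≤ C) :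
    (∀ t > 0, ∀ r < 1, ∃ᶠ n in atTop, r < closeTimesFraction T x y t n) ↔
      ∀ ε > 0, ∃ᶠ n in atTop, distAverage T x y n < ε := by
  constructor
  · intro h ε hε
    obtain ⟨t, ht, r, hr, himp⟩ := exists_closeTimesFraction_imp_distAverage_lt T x y hC hε
    exact ((h t ht r hr).and_eventually (eventually_ne_atTop 0)).mono
      fun n hn => himp n hn.2 hn.1
  · intro h t ht r hr
    exact ((h _ (mul_pos ht (sub_pos.2 hr))).and_eventually (eventually_ne_atTop 0)).mono
      fun n hn => lt_closeTimesFraction_of_distAverage_lt T x y ht hn.2 hn.1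

theorem forall_eventually_lt_closeTimesFraction_iff {C : ℝ} (hC : ∀ a b : X, dist a b ≤ C) :
    (∀ t > 0, ∀ r < 1, ∀ᶠ n in atTop, r < closeTimesFraction T x y t n) ↔
      ∀ ε > 0, ∀ᶠ n in atTop, distAverage T x y n < ε := by
  constructor
  · intro h ε hε
    obtain ⟨t, ht, r, hr, himp⟩ := exists_closeTimesFraction_imp_distAverage_lt T x y hC hε
    exact ((h t ht r hr).and (eventually_ne_atTop 0)).mono fun n hn => himp n hn.2 hn.1
  · intro h t ht r hr
    exact ((h _ (mul_pos ht (sub_pos.2 hr))).and (eventually_ne_atTop 0)).mono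
      fun n hn => lt_closeTimesFraction_of_distAverage_lt T x y ht hn.2 hn.1

end DistAverage

/-- **Ergodic-average characterization of DC2 pairs.** Let `X` be a metric space with bounded
distance, `T : X → X` any map and `x, y ∈ X`. Then `(x, y)` is DC2-scrambled (the orbits are
`t`-close with upper density `1` for all `t > 0`, and `t₀`-close with lower density `< 1` for
some `t₀ > 0`) if and only if the ergodic averages of `dist (T^[i] x) (T^[i] y)` have lower
limit `0` and positive upper limit. -/
theorem isDC2Pair_iff_distAverage {X : Type*} [MetricSpace X]
    (hbdd : ∃ C : ℝ, ∀ a b : X, dist a b ≤ C)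
    (T : X → X) (x y : X) :
    ((∀ t : ℝ, 0 < t →
        Filter.limsup (fun n : ℕ => closeTimesFraction T x y t n) Filter.atTop = 1) ∧
      (∃ t₀ : ℝ, 0 < t₀ ∧
        Filter.liminf (fun n : ℕ => closeTimesFraction T x y t₀ n) Filter.atTop < 1)) ↔
    (Filter.liminf (fun n : ℕ => distAverage T x y n) Filter.atTop = 0 ∧
      0 < Filter.limsup (fun n : ℕ => distAverage T x y n) Filter.atTop) := by
  obtain ⟨C, hC⟩ := hbdd
  have hf (t : ℝ) : atTop.IsBoundedUnder (· ≥ ·) (closeTimesFraction T x y t) :=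
    isBoundedUnder_of ⟨0, closeTimesFraction_nonneg T x y t⟩
  have hg : atTop.IsBoundedUnder (· ≤ ·) (distAverage T x y) :=
    isBoundedUnder_of ⟨C, distAverage_le T x y hC⟩
  simp only [limsup_eq_iff_frequently_lt (hf _) (closeTimesFraction_le_one T x y _),
    liminf_lt_iff_not_forall_eventually_lt (hf _) (closeTimesFraction_le_one T x y _),
    liminf_eq_iff_frequently_lt hg (distAverage_nonneg T x y),
    lt_limsup_iff_not_forall_eventually_lt hg (distAverage_nonneg T x y)]
  rw [← forall_frequently_lt_closeTimesFraction_iff T x y hC,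
    ← forall_eventually_lt_closeTimesFraction_iff T x y hC]
  simp only [not_forall, exists_prop]
end

section
/- Let (X, 𝔅, μ) be a probability space and X' ∈ 𝔅 with μ(X') > 0, and let μ_{X'} be the conditional measure of μ on X'. Fix ε > 0, h > 0 and ε' > ε/μ(X'). Then there exists N ∈ ℕ such that for every n ≥ N and every finite measurable partition P of X: if P is μ-roughly equal with parameters ε, n, h, then P is μ_{X'}-roughly equal with parameters ε', n, h. -/
open MeasureTheory ProbabilityTheory

/-! Conditioning on `X'` multiplies the measure of each atom by at most `1 / μ(X')`. Hence the
atoms that are bad for `μ` carry `μ_{X'}`-mass less than `ε / μ(X')`, and a `μ`-good atom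
cannot be too large for `μ_{X'}` once `2 ^ (-n (ε' - ε)) < μ(X')`. A `μ`-good atom that is too
small for `μ_{X'}` has `μ_{X'}`-mass at most `2 ^ (-n (h + ε'))`, and there are fewer than
`2 ^ (n (h + ε))` good atoms, so together these carry mass at most `2 ^ (-n (ε' - ε))`,
which tends to `0`. -/

/-- `P` is a finite measurable partition of `X` (indexed by a finite index type). -/
structure IsPartition {X : Type*} [MeasurableSpace X] {ι : Type*} (P : ι → Set X) : Prop where
  meas : ∀ i, MeasurableSet (P i)
  disj : Pairwise (Function.onFun Disjoint P)
  cover : ⋃ i, P i = Set.univ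

open scoped Classical in
/-- The partition `P` is `μ`-roughly equal with parameters `ε, n, h`: the atoms whose measure
lies strictly between `2 ^ (-n (h + ε))` and `2 ^ (-n (h - ε))` (the "good" atoms) carry total
measure greater than `1 - ε`. -/
noncomputable def RoughlyEqual {X : Type*} [MeasurableSpace X] {ι : Type*} [Fintype ι]
    (μ : Measure X) (P : ι → Set X) (ε : ℝ) (n : ℕ) (h : ℝ) : Prop :=
  1 - ε < ∑ i ∈ Finset.univ.filter (fun i =>
      (2 : ℝ) ^ (-(n : ℝ) * (h + ε)) < (μ (P i)).toReal ∧
      (μ (P i)).toReal < (2 : ℝ) ^ (-(n : ℝ) * (h - ε))), (μ (P i)).toReal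

open Filter Topology Finset

theorem IsPartition.sum_measure_toReal {X ι : Type*} [MeasurableSpace X] [Fintype ι]
    {P : ι → Set X} (hP : IsPartition P) (ρ : Measure X) [IsProbabilityMeasure ρ] :
    ∑ i, (ρ (P i)).toReal = 1 := by
  rw [← ENNReal.toReal_sum fun i _ => measure_ne_top ρ _,
    ← tsum_fintype (L := .unconditional _),
    ← measure_iUnion hP.disj hP.meas, hP.cover, measure_univ, ENNReal.toReal_one]

theorem ProbabilityTheory.cond_toReal_le {X : Type*} [MeasurableSpace X] (μ : Measure X)
    [IsFiniteMeasure μ] (s t : Set X) : (μ[|s] t).toReal ≤ (μ t).toReal / (μ s).toReal := by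
  rw [cond, Measure.smul_apply, smul_eq_mul, ENNReal.toReal_mul, ENNReal.toReal_inv,
    div_eq_inv_mul]
  exact mul_le_mul_of_nonneg_left
    (ENNReal.toReal_mono (measure_ne_top μ t) (Measure.restrict_apply_le s t)) (by positivity)

theorem tendsto_two_rpow_neg_natCast_mul {c : ℝ} (hc : 0 < c) :
    Tendsto (fun n : ℕ => (2 : ℝ) ^ (-(n : ℝ) * c)) atTop (𝓝 0) := by
  have h2c : (2 : ℝ) ^ (-c) < 1 :=
    Real.rpow_lt_one_of_one_lt_of_neg one_lt_two (neg_neg_of_pos hc)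
  convert tendsto_pow_atTop_nhds_zero_of_lt_one (by positivity) h2c using 1
  ext n
  rw [← Real.rpow_natCast, ← Real.rpow_mul zero_le_two]
  ring_nf

section ProbabilityVector

variable {ι : Type*} [Fintype ι] {p q : ι → ℝ} {m δ b B b' B' : ℝ}

open scoped Classical in
theorem sum_sdiff_filter_le (hp0 : ∀ i, 0 ≤ p i) (hp : ∑ i, p i = 1) (hm : 0 < m)
    (hqp : ∀ i, q i ≤ p i / m) (hδ : 0 ≤ δ) (hb'0 : 0 ≤ b') (hb : b' ≤ δ * b)
    (hB : B ≤ m * B') :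
    ∑ i ∈ univ.filter (fun i => b < p i ∧ p i < B) \
      univ.filter (fun i => b' < q i ∧ q i < B'), q i ≤ δ := by
  set S := univ.filter (fun i => b < p i ∧ p i < B)
  set T := univ.filter (fun i => b' < q i ∧ q i < B')
  have hcard : #S * b ≤ 1 := calc
    #S * b ≤ ∑ i ∈ S, p i := by
      simpa using card_nsmul_le_sum S p b fun i hi => (mem_filter.1 hi).2.1.le
    _ ≤ ∑ i, p i := sum_le_sum_of_subset_of_nonneg (subset_univ S) fun i _ _ => hp0 i
    _ = 1 := hp
  have hsmall : ∀ i ∈ S \ T, q i ≤ b' := by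
    intro i hi
    obtain ⟨hiS, hiT⟩ := mem_sdiff.1 hi
    have hqB' : q i < B' := calc
      q i ≤ p i / m := hqp i
      _ < B / m := by gcongr; exact (mem_filter.1 hiS).2.2
      _ ≤ B' := by rwa [div_le_iff₀' hm]
    by_contra! hbq
    exact hiT (mem_filter.2 ⟨mem_univ i, hbq, hqB'⟩)
  calc ∑ i ∈ S \ T, q i ≤ #(S \ T) * b' := by simpa using sum_le_card_nsmul _ q b' hsmall
    _ ≤ #S * (δ * b) := by
        gcongr
        exact sdiff_subset
    _ = δ * (#S * b) := by ring
    _ ≤ δ := mul_le_of_le_one_right hδ hcard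

open scoped Classical in
theorem lt_sum_filter_of_le_div (hp0 : ∀ i, 0 ≤ p i) (hp : ∑ i, p i = 1)
    (hq0 : ∀ i, 0 ≤ q i) (hq : ∑ i, q i = 1) (hm : 0 < m) (hqp : ∀ i, q i ≤ p i / m)
    (hδ : 0 ≤ δ) (hb'0 : 0 ≤ b') (hb : b' ≤ δ * b) (hB : B ≤ m * B') {ε : ℝ}
    (hS : 1 - ε < ∑ i ∈ univ.filter (fun i => b < p i ∧ p i < B), p i) :
    1 - (ε / m + δ) < ∑ i ∈ univ.filter (fun i => b' < q i ∧ q i < B'), q i := by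
  set S := univ.filter (fun i => b < p i ∧ p i < B)
  set T := univ.filter (fun i => b' < q i ∧ q i < B')
  have hpSc : ∑ i ∈ Sᶜ, p i < ε := by linarith [sum_add_sum_compl S p]
  have hqSc : ∑ i ∈ Sᶜ, q i < ε / m := calc
    ∑ i ∈ Sᶜ, q i ≤ ∑ i ∈ Sᶜ, p i / m := sum_le_sum fun i _ => hqp i
    _ = (∑ i ∈ Sᶜ, p i) / m := (sum_div _ _ _).symm
    _ < ε / m := by gcongr
  have hqST : ∑ i ∈ S \ T, q i ≤ δ := sum_sdiff_filter_le hp0 hp hm hqp hδ hb'0 hb hB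
  have hqT : ∑ i ∈ S ∩ T, q i ≤ ∑ i ∈ T, q i :=
    sum_le_sum_of_subset_of_nonneg inter_subset_right fun i _ _ => hq0 i
  linarith [sum_add_sum_compl S q, sum_inter_add_sum_sdiff S T q]

end ProbabilityVector

theorem roughlyEqual_conditional_general {X : Type*} [MeasurableSpace X]
    (μ : Measure X) [IsProbabilityMeasure μ]
    (X' : Set X) (hX'pos : 0 < μ X')
    (ε h ε' : ℝ) (hε : 0 < ε) (hε' : ε / (μ X').toReal < ε') :
    ∃ N : ℕ, ∀ n : ℕ, N ≤ n →
      ∀ (l : ℕ) (P : Fin l → Set X), IsPartition P →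
        RoughlyEqual μ P ε n h → RoughlyEqual (μ[|X']) P ε' n h := by
  set m := (μ X').toReal
  have hm : 0 < m := ENNReal.toReal_pos hX'pos.ne' (measure_ne_top μ X')
  have hm1 : m ≤ 1 := ENNReal.toReal_le_of_le_ofReal zero_le_one (by simpa using prob_le_one)
  have hεε' : ε < ε' := (le_div_self hε.le hm hm1).trans_lt hε'
  obtain ⟨N, hN⟩ := eventually_atTop.1 <|
    (tendsto_two_rpow_neg_natCast_mul (sub_pos.2 hεε')).eventually
      (gt_mem_nhds (lt_min hm (sub_pos.2 hε')))
  refine ⟨N, fun n hn l P hP hRE => ?_⟩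
  set δ := (2 : ℝ) ^ (-(n : ℝ) * (ε' - ε))
  have hδ : δ < min m (ε' - ε / m) := hN n hn
  have : IsProbabilityMeasure μ[|X'] := cond_isProbabilityMeasure hX'pos.ne'
  have hb : (2 : ℝ) ^ (-(n : ℝ) * (h + ε')) = δ * 2 ^ (-(n : ℝ) * (h + ε)) := by
    rw [← Real.rpow_add two_pos]; ring_nf
  have hB : (2 : ℝ) ^ (-(n : ℝ) * (h - ε)) ≤ m * 2 ^ (-(n : ℝ) * (h - ε')) := calc
    _ = δ * 2 ^ (-(n : ℝ) * (h - ε')) := by rw [← Real.rpow_add two_pos]; ring_nf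
    _ ≤ m * 2 ^ (-(n : ℝ) * (h - ε')) := by gcongr; exact hδ.le.trans (min_le_left _ _)
  have hgood := lt_sum_filter_of_le_div
    (fun _ => ENNReal.toReal_nonneg) (hP.sum_measure_toReal μ)
    (fun _ => ENNReal.toReal_nonneg) (hP.sum_measure_toReal μ[|X']) hm
    (fun i => cond_toReal_le μ X' (P i)) (by positivity) (by positivity) hb.le hB hRE
  unfold RoughlyEqual
  linarith [min_le_right m (ε' - ε / m)]

/-- **Fact 1 of the paper.** Let `X' ⊆ X` have positive measure, and fix `ε > 0`, `h > 0` and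
`ε' > ε / μ(X')`. Then for all large enough `n`, any finite measurable partition which is
`μ`-roughly equal with parameters `ε, n, h` is roughly equal with parameters `ε', n, h` for
the conditional measure `μ_{X'}`. -/
theorem roughlyEqual_conditional {X : Type*} [MeasurableSpace X]
    (μ : Measure X) [IsProbabilityMeasure μ]
    (X' : Set X) (hX'meas : MeasurableSet X') (hX'pos : 0 < μ X')
    (ε h ε' : ℝ) (hε : 0 < ε) (hh : 0 < h) (hε' : ε / (μ X').toReal < ε') :
    ∃ N : ℕ, ∀ n : ℕ, N ≤ n →
      ∀ (l : ℕ) (P : Fin l → Set X), IsPartition P →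
        RoughlyEqual μ P ε n h → RoughlyEqual (μ[|X']) P ε' n h :=
  roughlyEqual_conditional_general μ X' hX'pos ε h ε' hε hε'
end
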